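/- In the homotopy braid group B̂₃, denoting by the same letters σ₁, σ₂ the images of the braid generators, b₁₂, b₁₃, b₂₃ the images of σ₁², σ₂σ₁²σ₂^{-1}, σ₂², and z = [b₂₃, b₁₃], the following conjugation formulas hold: σ₁^{-1}b₁₂σ₁ = b₁₂, σ₁ b₁₂ σ₁^{-1} = b₁₂, σ₁^{-1}b₁₃σ₁ = b₂₃z^{-1}, σ₁^{-1}b₂₃σ₁ = b₁₃, σ₁ b₁₃ σ₁^{-1} = b₂₃, σ₁ b₂₃ σ₁^{-1} = b₁₃ z^{-1}, and σ₁ z σ₁^{-1} = z^{-1}. -/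

import Mathlib

/-!
Write `u, v` for the images of `σ₁, σ₂`, so `b₁₂ = u²`, `b₁₃ = v u² v⁻¹`, `b₂₃ = v²`.
The braid relation says `(uv) u (uv)⁻¹ = v`, whence `u b₁₃ u⁻¹ = b₂₃`, and
`b₁₂ b₁₃ b₂₃ = (uvu)²` is the full twist, which is central. Centrality turns conjugation
by `u² = b₁₂` into conjugation by `b₂₃⁻¹` (resp. by `b₁₃`), giving
`u b₂₃ u⁻¹ = b₂₃⁻¹ b₁₃ b₂₃ = b₁₃ z⁻¹` and `u⁻¹ b₁₃ u = b₁₃ b₂₃ b₁₃⁻¹`. Only the last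
identity `b₁₃ b₂₃ b₁₃⁻¹ = b₂₃ z⁻¹` and `u z u⁻¹ = [b₂₃⁻¹ b₁₃ b₂₃, b₂₃] = z⁻¹` use the
homotopy relations: `b₁₃` commutes with its conjugate by `b₂₃`, and vice versa.
-/

/-- The commutator `[x, y] = x⁻¹ y⁻¹ x y` used in the paper. -/
def pcomm {G : Type*} [Group G] (x y : G) : G := x⁻¹ * y⁻¹ * x * y

/-- The braid relation `σ₁σ₂σ₁ = σ₂σ₁σ₂` on two generators. -/
def braidRel3 : Set (FreeGroup (Fin 2)) :=
  { FreeGroup.of 0 * FreeGroup.of 1 * FreeGroup.of 0 *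
      (FreeGroup.of 1 * FreeGroup.of 0 * FreeGroup.of 1)⁻¹ }

/-- The braid group `B₃`. -/
abbrev B3 := PresentedGroup braidRel3

/-- The generator `σ₁` of `B₃`. -/
def s1 : B3 := PresentedGroup.of 0
/-- The generator `σ₂` of `B₃`. -/
def s2 : B3 := PresentedGroup.of 1
/-- `a₁₂ = σ₁²`. -/
def a12 : B3 := s1 ^ 2
/-- `a₁₃ = σ₂σ₁²σ₂⁻¹`. -/
def a13 : B3 := s2 * s1 ^ 2 * s2⁻¹
/-- `a₂₃ = σ₂²`. -/
def a23 : B3 := s2 ^ 2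

/-- The homotopy relations in `B₃`: `[a₁₃, g⁻¹a₁₃g]` and `[a₂₃, g⁻¹a₂₃g]` for `g`
in the subgroup generated by `a₁₃` and `a₂₃`. -/
def homotopyRels3 : Set B3 :=
  { x | ∃ g ∈ Subgroup.closure {a13, a23},
        x = pcomm a13 (g⁻¹ * a13 * g) ∨ x = pcomm a23 (g⁻¹ * a23 * g) }

/-- The homotopy braid group `B̂₃`. -/
abbrev HB3 := B3 ⧸ Subgroup.normalClosure homotopyRels3

/-- The canonical projection `B₃ → B̂₃`. -/
def pr : B3 →* HB3 := QuotientGroup.mk' _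

/-- The image of `σ₁` in `B̂₃`. -/
def t1 : HB3 := pr s1
/-- The image of `σ₂` in `B̂₃`. -/
def t2 : HB3 := pr s2
/-- The image `b₁₂` of `a₁₂` in `B̂₃`. -/
def b12 : HB3 := pr a12
/-- The image `b₁₃` of `a₁₃` in `B̂₃`. -/
def b13 : HB3 := pr a13
/-- The image `b₂₃` of `a₂₃` in `B̂₃`. -/
def b23 : HB3 := pr a23
/-- `z = [b₂₃, b₁₃]`. -/
def zz : HB3 := pcomm b23 b13

section Commutators

variable {G : Type*} [Group G] {a b c : G}

theorem pcomm_eq_one_iff_commute : pcomm a b = 1 ↔ Commute a b := by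
  rw [show pcomm a b = (b * a)⁻¹ * (a * b) by simp only [pcomm, mul_inv_rev, mul_assoc],
    inv_mul_eq_one, eq_comm]
  rfl

theorem map_pcomm {H F : Type*} [Group H] [FunLike F G H] [MonoidHomClass F G H] (f : F)
    (x y : G) : f (pcomm x y) = pcomm (f x) (f y) := by
  simp only [pcomm, map_mul, map_inv]

theorem conj_eq_mul_inv_pcomm : c⁻¹ * b * c = b * (pcomm c b)⁻¹ := by
  rw [pcomm]; group

theorem conj_eq_mul_inv_pcomm_of_commute (h : Commute b (c⁻¹ * b * c)) :
    b * c * b⁻¹ = c * (pcomm c b)⁻¹ :=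
  calc b * c * b⁻¹ = c * ((c⁻¹ * b * c) * b⁻¹) := by group
    _ = c * (b⁻¹ * (c⁻¹ * b * c)) := by rw [h.inv_left.eq]
    _ = c * (pcomm c b)⁻¹ := by rw [pcomm]; group

theorem pcomm_conj_eq_inv_pcomm_of_commute (h : Commute c (b⁻¹ * c * b)) :
    pcomm (c⁻¹ * b * c) c = (pcomm c b)⁻¹ :=
  calc pcomm (c⁻¹ * b * c) c = c⁻¹ * ((b⁻¹ * c * b)⁻¹ * c) * c := by rw [pcomm]; group
    _ = c⁻¹ * (c * (b⁻¹ * c * b)⁻¹) * c := by rw [h.inv_right.eq]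
    _ = (pcomm c b)⁻¹ := by rw [pcomm]; group

theorem conj_eq_inv_conj_of_commute (ha : Commute (a * b * c) a) (hc : Commute (a * b * c) c) :
    a * b * a⁻¹ = c⁻¹ * b * c :=
  calc a * b * a⁻¹ = (a * b * c) * (a * c)⁻¹ := by group
    _ = (a * c)⁻¹ * (a * b * c) := ((ha.mul_right hc).inv_right).eq
    _ = c⁻¹ * b * c := by group

theorem inv_conj_eq_conj_of_commute (hc : Commute (a * b * c) c) :
    a⁻¹ * c * a = b * c * b⁻¹ :=
  calc a⁻¹ * c * a = b * ((a * b)⁻¹ * (c * (a * b * c))) * (b * c)⁻¹ := by group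
    _ = b * ((a * b)⁻¹ * ((a * b * c) * c)) * (b * c)⁻¹ := by rw [hc.eq]
    _ = b * c * b⁻¹ := by group

end Commutators

section BraidRelation

variable {G : Type*} [Group G] {u v : G}

theorem semiconjBy_mul_of_braid (h : u * v * u = v * u * v) : SemiconjBy (u * v) u v := by
  rw [SemiconjBy, h, mul_assoc]

theorem semiconjBy_half_twist_left (h : u * v * u = v * u * v) :
    SemiconjBy (u * v * u) u v := by
  unfold SemiconjBy
  nth_rewrite 1 [h]
  simp only [mul_assoc]

theorem semiconjBy_half_twist_right (h : u * v * u = v * u * v) :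
    SemiconjBy (u * v * u) v u := by
  unfold SemiconjBy
  nth_rewrite 2 [h]
  simp only [mul_assoc]

theorem commute_full_twist_left (h : u * v * u = v * u * v) : Commute ((u * v * u) ^ 2) u := by
  rw [sq]
  exact (semiconjBy_half_twist_right h).mul_left (semiconjBy_half_twist_left h)

theorem commute_full_twist_right (h : u * v * u = v * u * v) : Commute ((u * v * u) ^ 2) v := by
  rw [sq]
  exact (semiconjBy_half_twist_left h).mul_left (semiconjBy_half_twist_right h)

theorem conj_conj_sq_of_braid (h : u * v * u = v * u * v) :
    u * (v * u ^ 2 * v⁻¹) * u⁻¹ = v ^ 2 :=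
  calc u * (v * u ^ 2 * v⁻¹) * u⁻¹ = u * v * u ^ 2 * (u * v)⁻¹ := by group
    _ = v ^ 2 := mul_inv_eq_iff_eq_mul.mpr ((semiconjBy_mul_of_braid h).pow_right 2)

theorem sq_mul_conj_sq_mul_sq_of_braid (h : u * v * u = v * u * v) :
    u ^ 2 * (v * u ^ 2 * v⁻¹) * v ^ 2 = (u * v * u) ^ 2 :=
  calc u ^ 2 * (v * u ^ 2 * v⁻¹) * v ^ 2
        = u * ((u * v * u) * (u * v)) := by simp only [sq, mul_assoc, inv_mul_cancel_left]
    _ = u * ((v * u * v) * (u * v)) := by rw [h]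
    _ = (u * v * u) * (v * u * v) := by simp only [mul_assoc]
    _ = (u * v * u) ^ 2 := by rw [← h, sq]

end BraidRelation

theorem s1_mul_s2_mul_s1 : s1 * s2 * s1 = s2 * s1 * s2 :=
  PresentedGroup.mk_eq_mk_of_mul_inv_mem rfl

theorem t1_mul_t2_mul_t1 : t1 * t2 * t1 = t2 * t1 * t2 := by
  have h := congrArg pr s1_mul_s2_mul_s1
  simp only [map_mul] at h
  exact h

theorem b12_eq : b12 = t1 ^ 2 := map_pow pr s1 2

theorem b13_eq : b13 = t2 * t1 ^ 2 * t2⁻¹ := by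
  simp only [b13, a13, map_mul, map_inv, map_pow, t1, t2]

theorem b23_eq : b23 = t2 ^ 2 := map_pow pr s2 2

theorem t1_mul_b13_mul_t1_inv : t1 * b13 * t1⁻¹ = b23 := by
  rw [b13_eq, b23_eq]
  exact conj_conj_sq_of_braid t1_mul_t2_mul_t1

theorem b12_mul_b13_mul_b23 : b12 * b13 * b23 = (t1 * t2 * t1) ^ 2 := by
  rw [b12_eq, b13_eq, b23_eq]
  exact sq_mul_conj_sq_mul_sq_of_braid t1_mul_t2_mul_t1

theorem commute_b12_mul_b13_mul_b23_b12 : Commute (b12 * b13 * b23) b12 := by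
  rw [b12_mul_b13_mul_b23, b12_eq]
  exact (commute_full_twist_left t1_mul_t2_mul_t1).pow_right 2

theorem commute_b12_mul_b13_mul_b23_b23 : Commute (b12 * b13 * b23) b23 := by
  rw [b12_mul_b13_mul_b23, b23_eq]
  exact (commute_full_twist_right t1_mul_t2_mul_t1).pow_right 2

theorem pr_eq_one_of_mem_homotopyRels3 {x : B3} (hx : x ∈ homotopyRels3) : pr x = 1 :=
  (QuotientGroup.eq_one_iff x).mpr (Subgroup.subset_normalClosure hx)

theorem commute_b13_conj_b23 : Commute b13 (b23⁻¹ * b13 * b23) := by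
  rw [← pcomm_eq_one_iff_commute]
  have h := pr_eq_one_of_mem_homotopyRels3 ⟨a23, Subgroup.subset_closure (by simp), Or.inl rfl⟩
  simp only [map_pcomm, map_mul, map_inv] at h
  exact h

theorem commute_b23_conj_b13 : Commute b23 (b13⁻¹ * b23 * b13) := by
  rw [← pcomm_eq_one_iff_commute]
  have h := pr_eq_one_of_mem_homotopyRels3 ⟨a13, Subgroup.subset_closure (by simp), Or.inr rfl⟩
  simp only [map_pcomm, map_mul, map_inv] at h
  exact h

/-- Conjugation formulas by `σ₁` in `B̂₃`. -/
theorem sigma1_conjugation :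
    t1⁻¹ * b12 * t1 = b12 ∧
    t1 * b12 * t1⁻¹ = b12 ∧
    t1⁻¹ * b13 * t1 = b23 * zz⁻¹ ∧
    t1⁻¹ * b23 * t1 = b13 ∧
    t1 * b13 * t1⁻¹ = b23 ∧
    t1 * b23 * t1⁻¹ = b13 * zz⁻¹ ∧
    t1 * zz * t1⁻¹ = zz⁻¹ := by
  have hconj13 := t1_mul_b13_mul_t1_inv
  have hinvconj23 : t1⁻¹ * b23 * t1 = b13 := by rw [← hconj13]; group
  have hconj23 : t1 * b23 * t1⁻¹ = b23⁻¹ * b13 * b23 :=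
    calc t1 * b23 * t1⁻¹ = b12 * b13 * b12⁻¹ := by
          rw [← hconj13, b12_eq]; simp only [sq, mul_inv_rev, mul_assoc]
      _ = b23⁻¹ * b13 * b23 :=
          conj_eq_inv_conj_of_commute commute_b12_mul_b13_mul_b23_b12
            commute_b12_mul_b13_mul_b23_b23
  have hinvconj13 : t1⁻¹ * b13 * t1 = b13 * b23 * b13⁻¹ :=
    calc t1⁻¹ * b13 * t1 = b12⁻¹ * b23 * b12 := by
          rw [← hinvconj23, b12_eq]; simp only [sq, mul_inv_rev, mul_assoc]
      _ = b13 * b23 * b13⁻¹ := inv_conj_eq_conj_of_commute commute_b12_mul_b13_mul_b23_b23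
  refine ⟨?_, ?_, ?_, hinvconj23, hconj13, ?_, ?_⟩
  · rw [b12_eq]; group
  · rw [b12_eq]; group
  · rw [hinvconj13]; exact conj_eq_mul_inv_pcomm_of_commute commute_b13_conj_b23
  · rw [hconj23]; exact conj_eq_mul_inv_pcomm
  · rw [← MulAut.conj_apply, zz, map_pcomm, MulAut.conj_apply, MulAut.conj_apply, hconj23,
      hconj13]
    exact pcomm_conj_eq_inv_pcomm_of_commute commute_b23_conj_b13
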